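/- Let γ, σ, v > 0, let y_f > 0 with v/σ < y_f, and let f : ℝ → ℝ be continuous, nondecreasing, with f(y) = 0 for y ≤ y_f and f(y) > 0 for y > y_f. Let (x, y, L) : [0,∞) → ℝ³ be a differentiable solution of ẋ = (1/L)(v − γxy), ẏ = γxy − σy, L̇ = f(y) with x(0), y(0), L(0) > 0. Then either L(t) → ∞ as t → ∞, or there exist a stopping time T* > 0 and a final length L* > 0 such that L(t) = L* for all t ≥ T*; in the latter case x(t) → σ/γ and y(t) → v/σ as t → ∞. -/

import Mathlib

/-!
`L` is nondecreasing, so it either tends to infinity or stays below some `C`. In the bounded case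
`V = (x - σ/γ)² / 2 + (σ/γ) G(y) / L`, with `G(z) = z - v/σ - (v/σ) log (z / (v/σ))` the
Lotka–Volterra function, is a Lyapunov function:
`V̇ = -γ y (x - σ/γ)² / L - (σ/γ) G(y) f(y) / L² ≤ 0`.
Its sublevel sets confine `(x, y, L)` to a compact box with `y` bounded away from `0`, so every
continuous observable is uniformly continuous along the solution. A Barbalat-type argument then
gives `x → σ/γ` and `ẋ → 0`, hence `γ x y → v` and `y → v/σ < y_f`; once `y < y_f`,
`L̇ = f(y) = 0`.
-/

open Filter Set Topology

section HalfLine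

variable {a : ℝ}

lemma monotoneOn_Ici_of_hasDerivAt_nonneg {g g' : ℝ → ℝ}
    (hg : ∀ t ∈ Ici a, HasDerivAt g (g' t) t) (hg' : ∀ t ∈ Ici a, 0 ≤ g' t) :
    MonotoneOn g (Ici a) :=
  monotoneOn_of_hasDerivWithinAt_nonneg (convex_Ici a)
    (fun t ht => (hg t ht).continuousAt.continuousWithinAt)
    (fun t ht => (hg t (interior_subset ht)).hasDerivWithinAt)
    (fun t ht => hg' t (interior_subset ht))

lemma antitoneOn_Ici_of_hasDerivAt_nonpos {g g' : ℝ → ℝ}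
    (hg : ∀ t ∈ Ici a, HasDerivAt g (g' t) t) (hg' : ∀ t ∈ Ici a, g' t ≤ 0) :
    AntitoneOn g (Ici a) :=
  antitoneOn_of_hasDerivWithinAt_nonpos (convex_Ici a)
    (fun t ht => (hg t ht).continuousAt.continuousWithinAt)
    (fun t ht => (hg t (interior_subset ht)).hasDerivWithinAt)
    (fun t ht => hg' t (interior_subset ht))

lemma eq_of_hasDerivAt_zero_Ici {g : ℝ → ℝ} (hg : ∀ t ∈ Ici a, HasDerivAt g 0 t) :
    ∀ t ∈ Ici a, g t = g a := fun _ ht =>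
  le_antisymm (antitoneOn_Ici_of_hasDerivAt_nonpos hg (fun _ _ => le_rfl) self_mem_Ici ht ht)
    (monotoneOn_Ici_of_hasDerivAt_nonneg hg (fun _ _ => le_rfl) self_mem_Ici ht ht)

lemma AntitoneOn.exists_tendsto_of_bddBelow {g : ℝ → ℝ} (hg : AntitoneOn g (Ici a))
    (hb : BddBelow (g '' Ici a)) : ∃ c, Tendsto g atTop (𝓝 c) := by
  have hanti : Antitone fun t => g (max a t) := fun s t hst =>
    hg (le_max_left a s) (le_max_left a t) (max_le_max le_rfl hst)
  obtain ⟨m, hm⟩ := hb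
  refine ⟨_, (tendsto_atTop_ciInf hanti ⟨m, ?_⟩).congr' ?_⟩
  · exact forall_mem_range.2 fun t => hm (mem_image_of_mem g (le_max_left a t))
  · filter_upwards [eventually_ge_atTop a] with t ht
    rw [max_eq_right ht]

lemma pos_of_hasDerivAt_eq_mul {y k : ℝ → ℝ} (hk : ContinuousOn k (Ici a))
    (hy : ∀ t ∈ Ici a, HasDerivAt y (k t * y t) t) (ha : 0 < y a) : ∀ t ∈ Ici a, 0 < y t := by
  set k' : ℝ → ℝ := fun s => k (max a s)
  have hk' : Continuous k' :=
    hk.comp_continuous (continuous_const.max continuous_id) fun s => le_max_left a s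
  set G : ℝ → ℝ := fun t => ∫ s in a..t, k' s
  -- `y · exp (-∫ k)` has derivative zero
  have hmono : MonotoneOn (fun t => y t * Real.exp (-G t)) (Ici a) := by
    refine monotoneOn_Ici_of_hasDerivAt_nonneg (g' := fun _ => 0) (fun t ht => ?_)
      fun _ _ => le_rfl
    have hG : HasDerivAt G (k t) t := by
      simpa [k', max_eq_right (show a ≤ t from ht)] using
        (hk'.integral_hasStrictDerivAt a t).hasDerivAt
    exact ((hy t ht).mul hG.neg.exp).congr_deriv (by simp only [Pi.neg_apply]; ring)
  intro t ht
  exact pos_of_mul_pos_left ((mul_pos ha (Real.exp_pos _)).trans_le (hmono self_mem_Ici ht ht))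
    (Real.exp_pos _).le

lemma eventually_lt_of_hasDerivAt_le_neg {V V' A : ℝ → ℝ} {c ε : ℝ}
    (hV : ∀ t ∈ Ici a, HasDerivAt V (V' t) t) (hVA : ∀ t ∈ Ici a, V' t ≤ -A t)
    (hA : UniformContinuousOn A (Ici a)) (hVc : Tendsto V atTop (𝓝 c)) (hε : 0 < ε) :
    ∀ᶠ t in atTop, A t < ε := by
  obtain ⟨δ, hδ, hAδ⟩ := Metric.uniformContinuousOn_iff.1 hA (ε / 2) (half_pos hε)
  have hinc : Tendsto (fun t => V (t + δ / 2) - V t) atTop (𝓝 0) := by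
    simpa using (hVc.comp (tendsto_atTop_add_const_right _ _ tendsto_id)).sub hVc
  have hεδ : -(ε / 2 * (δ / 2)) < 0 := neg_lt_zero.2 (by positivity)
  filter_upwards [hinc.eventually (lt_mem_nhds hεδ), eventually_ge_atTop a] with t hVt hat
  by_contra! hAt
  -- by the mean value theorem `V` drops by at least `ε δ / 4` on `[t, t + δ / 2]`
  obtain ⟨ξ, hξ, hslope⟩ := exists_hasDerivAt_eq_slope V V' (by linarith : t < t + δ / 2)
    (fun s hs => (hV s (hat.trans hs.1)).continuousAt.continuousWithinAt)
    (fun s hs => hV s (hat.trans hs.1.le))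
  have haξ : a ≤ ξ := hat.trans hξ.1.le
  have hAξ : ε / 2 < A ξ := by
    have hdist : dist ξ t < δ := by
      rw [Real.dist_eq, abs_of_pos (sub_pos.2 hξ.1)]
      linarith [hξ.2]
    have := hAδ ξ haξ t hat hdist
    rw [Real.dist_eq] at this
    linarith [(abs_lt.1 this).1]
  have hincr : V (t + δ / 2) - V t = V' ξ * (δ / 2) := by
    rw [hslope, add_sub_cancel_left, div_mul_cancel₀ _ (by positivity)]
  nlinarith [hVA ξ haξ]

lemma tendsto_zero_of_hasDerivAt_le_neg {V V' A : ℝ → ℝ} {c : ℝ}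
    (hV : ∀ t ∈ Ici a, HasDerivAt V (V' t) t) (hVA : ∀ t ∈ Ici a, V' t ≤ -A t)
    (hA : UniformContinuousOn A (Ici a)) (hA₀ : ∀ t ∈ Ici a, 0 ≤ A t)
    (hVc : Tendsto V atTop (𝓝 c)) : Tendsto A atTop (𝓝 0) :=
  tendsto_order.2 ⟨fun _ hb => (eventually_ge_atTop a).mono fun t ht => hb.trans_le (hA₀ t ht),
    fun _ hb => eventually_lt_of_hasDerivAt_le_neg hV hVA hA hVc hb⟩

lemma tendsto_deriv_zero_of_uniformContinuousOn {g g' : ℝ → ℝ} {c : ℝ}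
    (hg : ∀ t ∈ Ici a, HasDerivAt g (g' t) t) (hg' : UniformContinuousOn g' (Ici a))
    (hgc : Tendsto g atTop (𝓝 c)) : Tendsto g' atTop (𝓝 0) := by
  refine tendsto_order.2 ⟨fun b hb => ?_, fun b hb =>
    eventually_lt_of_hasDerivAt_le_neg (fun t ht => (hg t ht).neg) (fun _ _ => le_rfl) hg'
      hgc.neg hb⟩
  have hneg := eventually_lt_of_hasDerivAt_le_neg (A := fun t => -g' t) hg
    (fun _ _ => (neg_neg _).ge) (uniformContinuous_neg.comp_uniformContinuousOn hg') hgc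
    (neg_pos.2 hb)
  filter_upwards [hneg] with t ht
  linarith

lemma uniformContinuousOn_of_hasDerivAt_mapsTo {E : Type*} [NormedAddCommGroup E]
    [NormedSpace ℝ E] {u : ℝ → E} {F : E → E} {s : Set ℝ} {K : Set E} (hs : Convex ℝ s)
    (hK : IsCompact K) (hF : ContinuousOn F K) (hu : ∀ t ∈ s, HasDerivAt u (F (u t)) t)
    (huK : MapsTo u s K) : UniformContinuousOn u s := by
  obtain ⟨C, hC⟩ := hK.exists_bound_of_continuousOn hF
  refine (hs.lipschitzOnWith_of_nnnorm_hasDerivWithin_le (C := C.toNNReal)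
    (fun t ht => (hu t ht).hasDerivWithinAt) fun t ht => ?_).uniformContinuousOn
  rw [← NNReal.coe_le_coe, coe_nnnorm]
  exact (hC _ (huK ht)).trans (Real.le_coe_toNNReal C)

end HalfLine

noncomputable def volterra (c z : ℝ) : ℝ := z - c - c * Real.log (z / c)

lemma hasDerivAt_volterra {c z : ℝ} (hc : c ≠ 0) (hz : z ≠ 0) :
    HasDerivAt (volterra c) (1 - c / z) z := by
  have hlog : HasDerivAt (fun w => Real.log (w / c)) (1 / z) z :=
    (((hasDerivAt_id z).div_const c).log (div_ne_zero hz hc)).congr_deriv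
      (by simp only [id]; field_simp)
  exact (((hasDerivAt_id z).sub_const c).sub (hlog.const_mul c)).congr_deriv (by ring)

lemma volterra_nonneg {c z : ℝ} (hc : 0 < c) (hz : 0 < z) : 0 ≤ volterra c z := by
  have h := mul_le_mul_of_nonneg_left (Real.log_le_sub_one_of_pos (div_pos hz hc)) hc.le
  rw [mul_sub, mul_div_cancel₀ _ hc.ne', mul_one] at h
  unfold volterra
  linarith

lemma mem_Icc_of_volterra_le {b c z : ℝ} (hc : 0 < c) (hz : 0 < z) (h : volterra c z ≤ b) :
    z ∈ Icc (c * Real.exp (-(b + c) / c)) (2 * (b + c)) := by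
  unfold volterra at h
  constructor
  · have hlog : -(b + c) / c ≤ Real.log (z / c) := by
      rw [div_le_iff₀' hc]
      linarith
    rw [← le_div_iff₀' hc]
    exact (Real.le_log_iff_exp_le (div_pos hz hc)).1 hlog
  · -- `log (z / c) = log 2 + log (z / 2c) ≤ log 2 + z / 2c - 1 < z / 2c`
    have hlog : Real.log (z / c) ≤ z / (2 * c) := by
      have h2 := Real.log_le_sub_one_of_pos (show 0 < z / (2 * c) by positivity)
      rw [show z / c = 2 * (z / (2 * c)) by field_simp, Real.log_mul two_ne_zero (by positivity)]
      linarith [Real.log_two_lt_d9]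
    have : c * Real.log (z / c) ≤ z / 2 := by
      calc c * Real.log (z / c) ≤ c * (z / (2 * c)) := mul_le_mul_of_nonneg_left hlog hc.le
        _ = z / 2 := by field_simp
    linarith

namespace PlantGrowth

structure IsSolution (γ σ v : ℝ) (f x y L : ℝ → ℝ) : Prop where
  hasDerivAt_x : ∀ t ∈ Ici (0 : ℝ), HasDerivAt x ((1 / L t) * (v - γ * x t * y t)) t
  hasDerivAt_y : ∀ t ∈ Ici (0 : ℝ), HasDerivAt y (γ * x t * y t - σ * y t) t
  hasDerivAt_L : ∀ t ∈ Ici (0 : ℝ), HasDerivAt L (f (y t)) t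

/-- The right-hand side of the system at the state `p = (x, y, L)`. -/
noncomputable def field (γ σ v : ℝ) (f : ℝ → ℝ) (p : ℝ × ℝ × ℝ) : ℝ × ℝ × ℝ :=
  ((1 / p.2.2) * (v - γ * p.1 * p.2.1), γ * p.1 * p.2.1 - σ * p.2.1, f p.2.1)

noncomputable def lyapunov (γ σ v : ℝ) (p : ℝ × ℝ × ℝ) : ℝ :=
  (p.1 - σ / γ) ^ 2 / 2 + σ / γ * volterra (v / σ) p.2.1 / p.2.2

lemma continuousOn_one_div_length : ContinuousOn (fun p : ℝ × ℝ × ℝ => 1 / p.2.2) {p | 0 < p.2.2} :=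
  continuousOn_const.div (by fun_prop) fun _ hp => ne_of_gt hp

lemma continuousOn_field {γ σ v : ℝ} {f : ℝ → ℝ} (hf : Continuous f) :
    ContinuousOn (field γ σ v f) {p | 0 < p.2.2} := by
  unfold field
  exact (continuousOn_one_div_length.mul (by fun_prop)).prodMk (by fun_prop)

lemma lyapunov_nonneg {γ σ v : ℝ} (hγ : 0 < γ) (hσ : 0 < σ) (hv : 0 < v) {p : ℝ × ℝ × ℝ}
    (hy : 0 < p.2.1) (hL : 0 < p.2.2) : 0 ≤ lyapunov γ σ v p := by
  have := volterra_nonneg (div_pos hv hσ) hy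
  unfold lyapunov
  positivity

namespace IsSolution

variable {γ σ v : ℝ} {f x y L : ℝ → ℝ}

lemma hasDerivAt_state (h : IsSolution γ σ v f x y L) {t : ℝ} (ht : t ∈ Ici 0) :
    HasDerivAt (fun t => (x t, y t, L t)) (field γ σ v f (x t, y t, L t)) t :=
  (h.hasDerivAt_x t ht).prodMk ((h.hasDerivAt_y t ht).prodMk (h.hasDerivAt_L t ht))

lemma monotoneOn_L (h : IsSolution γ σ v f x y L) (hf : ∀ z, 0 ≤ f z) : MonotoneOn L (Ici 0) :=
  monotoneOn_Ici_of_hasDerivAt_nonneg h.hasDerivAt_L fun t _ => hf (y t)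

lemma L_pos (h : IsSolution γ σ v f x y L) (hf : ∀ z, 0 ≤ f z) (hL0 : 0 < L 0) :
    ∀ t ∈ Ici 0, 0 < L t := fun _ ht =>
  hL0.trans_le (h.monotoneOn_L hf self_mem_Ici ht ht)

lemma y_pos (h : IsSolution γ σ v f x y L) (hy0 : 0 < y 0) : ∀ t ∈ Ici 0, 0 < y t := by
  have hx : ContinuousOn x (Ici 0) := fun t ht =>
    (h.hasDerivAt_x t ht).continuousAt.continuousWithinAt
  exact pos_of_hasDerivAt_eq_mul (k := fun t => γ * x t - σ)
    ((continuousOn_const.mul hx).sub continuousOn_const)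
    (fun t ht => (h.hasDerivAt_y t ht).congr_deriv (by ring)) hy0

lemma hasDerivAt_lyapunov (h : IsSolution γ σ v f x y L) (hγ : γ ≠ 0) (hσ : σ ≠ 0) (hv : v ≠ 0)
    {t : ℝ} (ht : t ∈ Ici 0) (hy : 0 < y t) (hL : 0 < L t) :
    HasDerivAt (fun t => lyapunov γ σ v (x t, y t, L t))
      (-(γ * y t * (x t - σ / γ) ^ 2 / L t)
        - σ / γ * volterra (v / σ) (y t) * f (y t) / L t ^ 2) t := by
  have hquad := (((h.hasDerivAt_x t ht).sub_const (σ / γ)).pow 2).div_const 2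
  have hvol := ((hasDerivAt_volterra (div_ne_zero hv hσ) hy.ne').comp t
    (h.hasDerivAt_y t ht)).const_mul (σ / γ)
  refine (hquad.add (hvol.div (h.hasDerivAt_L t ht) hL.ne')).congr_deriv ?_
  simp only [Function.comp_apply, Nat.cast_ofNat, Nat.add_one_sub_one, pow_one]
  field_simp
  ring

lemma antitoneOn_lyapunov (h : IsSolution γ σ v f x y L) (hγ : 0 < γ) (hσ : 0 < σ) (hv : 0 < v)
    (hf : ∀ z, 0 ≤ f z) (hy0 : 0 < y 0) (hL0 : 0 < L 0) :
    AntitoneOn (fun t => lyapunov γ σ v (x t, y t, L t)) (Ici 0) := by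
  refine antitoneOn_Ici_of_hasDerivAt_nonpos (fun t ht => h.hasDerivAt_lyapunov hγ.ne' hσ.ne'
    hv.ne' ht (h.y_pos hy0 t ht) (h.L_pos hf hL0 t ht)) fun t ht => ?_
  have hy := h.y_pos hy0 t ht
  have hL := h.L_pos hf hL0 t ht
  have := volterra_nonneg (div_pos hv hσ) hy
  have := hf (y t)
  have : 0 ≤ γ * y t * (x t - σ / γ) ^ 2 / L t := by positivity
  have : 0 ≤ σ / γ * volterra (v / σ) (y t) * f (y t) / L t ^ 2 := by positivity
  linarith

lemma exists_bounds (h : IsSolution γ σ v f x y L) (hγ : 0 < γ) (hσ : 0 < σ) (hv : 0 < v)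
    (hf : ∀ z, 0 ≤ f z) (hy0 : 0 < y 0) (hL0 : 0 < L 0) {C : ℝ} (hC : ∀ t ∈ Ici 0, L t ≤ C) :
    ∃ m M, 0 < m ∧ ∀ t ∈ Ici (0 : ℝ), |x t - σ / γ| ≤ M ∧ m ≤ y t ∧ y t ≤ M := by
  set V₀ := lyapunov γ σ v (x 0, y 0, L 0)
  set b := V₀ * C / (σ / γ)
  refine ⟨v / σ * Real.exp (-(b + v / σ) / (v / σ)), max √(2 * V₀) (2 * (b + v / σ)),
    by positivity, fun t ht => ?_⟩
  have hV : lyapunov γ σ v (x t, y t, L t) ≤ V₀ :=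
    h.antitoneOn_lyapunov hγ hσ hv hf hy0 hL0 self_mem_Ici ht ht
  have hy := h.y_pos hy0 t ht
  have hL := h.L_pos hf hL0 t ht
  have hvol := volterra_nonneg (div_pos hv hσ) hy
  unfold lyapunov at hV
  have hx : (x t - σ / γ) ^ 2 ≤ 2 * V₀ := by
    have : 0 ≤ σ / γ * volterra (v / σ) (y t) / L t := by positivity
    linarith
  have hyb : volterra (v / σ) (y t) ≤ b := by
    have : σ / γ * volterra (v / σ) (y t) / L t ≤ V₀ := by
      have := sq_nonneg (x t - σ / γ)
      linarith
    rw [div_le_iff₀ hL] at this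
    rw [le_div_iff₀' (by positivity)]
    have hV₀ : 0 ≤ V₀ := lyapunov_nonneg hγ hσ hv hy0 hL0
    linarith [mul_le_mul_of_nonneg_left (hC t ht) hV₀]
  obtain ⟨hym, hyM⟩ := mem_Icc_of_volterra_le (div_pos hv hσ) hy hyb
  exact ⟨(Real.abs_le_sqrt hx).trans (le_max_left _ _), hym, hyM.trans (le_max_right _ _)⟩

lemma uniformContinuousOn_comp (h : IsSolution γ σ v f x y L) (hγ : 0 < γ) (hσ : 0 < σ)
    (hv : 0 < v) (hfc : Continuous f) (hf : ∀ z, 0 ≤ f z) (hy0 : 0 < y 0) (hL0 : 0 < L 0)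
    {C : ℝ} (hC : ∀ t ∈ Ici 0, L t ≤ C) {Φ : ℝ × ℝ × ℝ → ℝ}
    (hΦ : ContinuousOn Φ {p | 0 < p.2.2}) :
    UniformContinuousOn (fun t => Φ (x t, y t, L t)) (Ici 0) := by
  obtain ⟨m, M, -, hb⟩ := h.exists_bounds hγ hσ hv hf hy0 hL0 hC
  set K := Icc (σ / γ - M) (σ / γ + M) ×ˢ Icc m M ×ˢ Icc (L 0) C
  have hK : IsCompact K := isCompact_Icc.prod (isCompact_Icc.prod isCompact_Icc)
  have hKpos : K ⊆ {p | 0 < p.2.2} := fun p hp => hL0.trans_le hp.2.2.1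
  have hmaps : MapsTo (fun t => (x t, y t, L t)) (Ici 0) K := by
    intro t ht
    obtain ⟨hx, hym, hyM⟩ := hb t ht
    obtain ⟨hx₁, hx₂⟩ := abs_sub_le_iff.1 hx
    exact ⟨⟨by linarith, by linarith⟩, ⟨hym, hyM⟩, h.monotoneOn_L hf self_mem_Ici ht ht, hC t ht⟩
  exact (hK.uniformContinuousOn_of_continuous (hΦ.mono hKpos)).comp
    (uniformContinuousOn_of_hasDerivAt_mapsTo (convex_Ici 0) hK
      ((continuousOn_field hfc).mono hKpos) (fun t ht => h.hasDerivAt_state ht) hmaps) hmaps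

lemma tendsto_x (h : IsSolution γ σ v f x y L) (hγ : 0 < γ) (hσ : 0 < σ) (hv : 0 < v)
    (hfc : Continuous f) (hf : ∀ z, 0 ≤ f z) (hy0 : 0 < y 0) (hL0 : 0 < L 0) {C : ℝ}
    (hC : ∀ t ∈ Ici 0, L t ≤ C) : Tendsto x atTop (𝓝 (σ / γ)) := by
  obtain ⟨m, _, hm, hb⟩ := h.exists_bounds hγ hσ hv hf hy0 hL0 hC
  have hCpos : 0 < C := hL0.trans_le (hC 0 self_mem_Ici)
  set κ := γ * m / C
  have hκ : 0 < κ := by positivity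
  obtain ⟨c, hc⟩ := (h.antitoneOn_lyapunov hγ hσ hv hf hy0 hL0).exists_tendsto_of_bddBelow
    ⟨0, forall_mem_image.2 fun t ht =>
      lyapunov_nonneg hγ hσ hv (h.y_pos hy0 t ht) (h.L_pos hf hL0 t ht)⟩
  have hsq : Tendsto (fun t => κ * (x t - σ / γ) ^ 2) atTop (𝓝 0) := by
    refine tendsto_zero_of_hasDerivAt_le_neg (fun t ht => h.hasDerivAt_lyapunov hγ.ne' hσ.ne'
      hv.ne' ht (h.y_pos hy0 t ht) (h.L_pos hf hL0 t ht)) (fun t ht => ?_)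
      (h.uniformContinuousOn_comp hγ hσ hv hfc hf hy0 hL0 hC
        (Φ := fun p => κ * (p.1 - σ / γ) ^ 2) (by fun_prop))
      (fun t _ => by positivity) hc
    have hy := h.y_pos hy0 t ht
    have hL := h.L_pos hf hL0 t ht
    have := volterra_nonneg (div_pos hv hσ) hy
    have := hf (y t)
    have : 0 ≤ σ / γ * volterra (v / σ) (y t) * f (y t) / L t ^ 2 := by positivity
    have : κ * (x t - σ / γ) ^ 2 ≤ γ * y t * (x t - σ / γ) ^ 2 / L t := by
      rw [div_mul_eq_mul_div]
      exact div_le_div₀ (by positivity) (by gcongr; exact (hb t ht).2.1) hL (hC t ht)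
    linarith
  have habs : Tendsto (fun t => |x t - σ / γ|) atTop (𝓝 0) := by
    simpa [Real.sqrt_sq_eq_abs, hκ.ne'] using (hsq.const_mul κ⁻¹).sqrt
  exact tendsto_iff_norm_sub_tendsto_zero.2 habs

lemma tendsto_y (h : IsSolution γ σ v f x y L) (hγ : 0 < γ) (hσ : 0 < σ) (hv : 0 < v)
    (hfc : Continuous f) (hf : ∀ z, 0 ≤ f z) (hy0 : 0 < y 0) (hL0 : 0 < L 0) {C : ℝ}
    (hC : ∀ t ∈ Ici 0, L t ≤ C) : Tendsto y atTop (𝓝 (v / σ)) := by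
  have hx := h.tendsto_x hγ hσ hv hfc hf hy0 hL0 hC
  have hx' : Tendsto (fun t => 1 / L t * (v - γ * x t * y t)) atTop (𝓝 0) :=
    tendsto_deriv_zero_of_uniformContinuousOn h.hasDerivAt_x
      (h.uniformContinuousOn_comp hγ hσ hv hfc hf hy0 hL0 hC
        (Φ := fun p => 1 / p.2.2 * (v - γ * p.1 * p.2.1))
        (continuousOn_one_div_length.mul (by fun_prop))) hx
  have hLx' : Tendsto (fun t => L t * (1 / L t * (v - γ * x t * y t))) atTop (𝓝 0) := by
    refine squeeze_zero_norm' (a := fun t => C * ‖1 / L t * (v - γ * x t * y t)‖) ?_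
      (by simpa using hx'.norm.const_mul C)
    filter_upwards [eventually_ge_atTop 0] with t ht
    rw [norm_mul, Real.norm_of_nonneg (h.L_pos hf hL0 t ht).le]
    exact mul_le_mul_of_nonneg_right (hC t ht) (norm_nonneg _)
  have hlim := (tendsto_const_nhds (x := v)).sub hLx' |>.div (hx.const_mul γ)
    (by positivity : γ * (σ / γ) ≠ 0)
  rw [sub_zero, mul_div_cancel₀ σ hγ.ne'] at hlim
  refine hlim.congr' ?_
  filter_upwards [eventually_ge_atTop 0, hx.eventually (lt_mem_nhds (div_pos hσ hγ))]
    with t ht hxt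
  have hL := h.L_pos hf hL0 t ht
  show (v - L t * (1 / L t * (v - γ * x t * y t))) / (γ * x t) = y t
  field_simp
  ring

end IsSolution
end PlantGrowth

theorem plant_growth_dichotomy_general
    (γ σ v yf : ℝ) (hγ : 0 < γ) (hσ : 0 < σ) (hv : 0 < v)
    (hthreshold : v / σ < yf)
    (f : ℝ → ℝ) (hf : Continuous f)
    (hf0 : ∀ y, y ≤ yf → f y = 0) (hfpos : ∀ y, yf < y → 0 < f y)
    (x y L : ℝ → ℝ)
    (hx : ∀ t, 0 ≤ t → HasDerivAt x ((1 / L t) * (v - γ * x t * y t)) t)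
    (hy : ∀ t, 0 ≤ t → HasDerivAt y (γ * x t * y t - σ * y t) t)
    (hL : ∀ t, 0 ≤ t → HasDerivAt L (f (y t)) t)
    (hy0 : 0 < y 0) (hL0 : 0 < L 0) :
    Tendsto L atTop atTop ∨
      ∃ Tstar > (0 : ℝ), ∃ Lstar > (0 : ℝ),
        (∀ t, Tstar ≤ t → L t = Lstar) ∧
        Tendsto x atTop (nhds (σ / γ)) ∧
        Tendsto y atTop (nhds (v / σ)) := by
  have hsol : PlantGrowth.IsSolution γ σ v f x y L := ⟨hx, hy, hL⟩
  have hfnn : ∀ z, 0 ≤ f z := fun z =>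
    (le_or_gt z yf).elim (fun h => (hf0 z h).ge) fun h => (hfpos z h).le
  by_cases hB : ∃ C, ∀ t ∈ Ici (0 : ℝ), L t ≤ C
  · right
    obtain ⟨C, hC⟩ := hB
    have hyc := hsol.tendsto_y hγ hσ hv hf hfnn hy0 hL0 hC
    obtain ⟨T, hT⟩ := eventually_atTop.1 (hyc.eventually (gt_mem_nhds hthreshold))
    have hT₁ : 0 < max T 1 := by positivity
    refine ⟨max T 1, hT₁, L (max T 1), hsol.L_pos hfnn hL0 _ hT₁.le, fun t ht => ?_,
      hsol.tendsto_x hγ hσ hv hf hfnn hy0 hL0 hC, hyc⟩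
    refine eq_of_hasDerivAt_zero_Ici (fun s hs => ?_) t ht
    have hLs := hL s (hT₁.le.trans hs)
    rwa [hf0 _ (hT s ((le_max_left T 1).trans hs)).le] at hLs
  · left
    push Not at hB
    refine tendsto_atTop.2 fun b => ?_
    obtain ⟨t₀, ht₀, hb⟩ := hB b
    filter_upwards [eventually_ge_atTop t₀] with t ht
    exact hb.le.trans (hsol.monotoneOn_L hfnn ht₀ (ht₀.trans ht) ht)

/-- Growth dichotomy for the plant growth model with `v/σ < y_f`: either the shoot
length `L(t)` grows without bound, or the growth stops: there are a stopping time
`T* > 0` and a final length `L*` with `L(t) = L*` for all `t ≥ T*`, and in the latter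
case the nutrient and hormone concentrations converge to `σ/γ` and `v/σ`. -/
theorem plant_growth_dichotomy
    (γ σ v yf : ℝ) (hγ : 0 < γ) (hσ : 0 < σ) (hv : 0 < v) (hyf : 0 < yf)
    (hthreshold : v / σ < yf)
    (f : ℝ → ℝ) (hf : Continuous f) (hmono : Monotone f)
    (hf0 : ∀ y, y ≤ yf → f y = 0) (hfpos : ∀ y, yf < y → 0 < f y)
    (x y L : ℝ → ℝ)
    (hx : ∀ t, 0 ≤ t → HasDerivAt x ((1 / L t) * (v - γ * x t * y t)) t)
    (hy : ∀ t, 0 ≤ t → HasDerivAt y (γ * x t * y t - σ * y t) t)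
    (hL : ∀ t, 0 ≤ t → HasDerivAt L (f (y t)) t)
    (hx0 : 0 < x 0) (hy0 : 0 < y 0) (hL0 : 0 < L 0) :
    Tendsto L atTop atTop ∨
      ∃ Tstar > (0 : ℝ), ∃ Lstar > (0 : ℝ),
        (∀ t, Tstar ≤ t → L t = Lstar) ∧
        Tendsto x atTop (nhds (σ / γ)) ∧
        Tendsto y atTop (nhds (v / σ)) :=
  plant_growth_dichotomy_general γ σ v yf hγ hσ hv hthreshold f hf hf0 hfpos x y L hx hy hL hy0 hL0
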